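/- arXiv:1109.5880 — 2 statements merged into one kernel-verified Lean document; each statement's English description precedes it below -/
import Mathlib

section
/- Let (X₁,X₂) and (Θ₁,Θ₂) be independent random vectors with all coordinates positive. Assume X₁ and X₂ are identically distributed and asymptotically independent, and that there exist α>0 and a bounded regularly varying function R:(0,∞)→(0,∞) of index −α which stays bounded away from 0 on every bounded interval, such that P[X₁>x] ≤ R(x) for all x>0. Assume further that for some ε>0, E[Θ₁^{α+ε}]<∞ and E[Θ₂^{α+ε}]<∞. Then P[Θ₁X₁>x, Θ₂X₂>x] / R(x) → 0 as x→∞. -/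
open MeasureTheory ProbabilityTheory Filter Topology
open scoped ENNReal

noncomputable section

/-- A function, positive on `(0,∞)`, is regularly varying at infinity with index `ρ`:
for every `t > 0`, `f(tx)/f(x) → t^ρ` as `x → ∞`. -/
def RegVarying (f : ℝ → ℝ) (ρ : ℝ) : Prop :=
  (∀ x : ℝ, 0 < x → 0 < f x) ∧
    ∀ t : ℝ, 0 < t → Tendsto (fun x : ℝ => f (t * x) / f x) atTop (nhds (t ^ ρ))

variable {Ω : Type*} [MeasurableSpace Ω]

/-- The (possibly infinite) moment `E[Θ^r]`. -/
def momE (P : Measure Ω) (Θ : Ω → ℝ) (r : ℝ) : ℝ≥0∞ :=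
  ∫⁻ ω, ENNReal.ofReal (Θ ω ^ r) ∂P

/-- The RW moment conditions for the sequence `{Θ_t}` and the index `α`:
if `0 < α < 1`, then `Σ_t E[Θ_t^{α+ε} + Θ_t^{α-ε}] < ∞` for some `ε ∈ (0,α)`;
if `α ≥ 1`, then `Σ_t (E[Θ_t^{α+ε} + Θ_t^{α-ε}])^{1/(α+ε)} < ∞` for some `ε ∈ (0,α)`. -/
def RWConditions (P : Measure Ω) (Θ : ℕ → Ω → ℝ) (α : ℝ) : Prop :=
  ∃ ε : ℝ, 0 < ε ∧ ε < α ∧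
    ((α < 1 ∧ (∑' t : ℕ, (momE P (Θ t) (α + ε) + momE P (Θ t) (α - ε))) ≠ ⊤) ∨
      (1 ≤ α ∧
        (∑' t : ℕ, (momE P (Θ t) (α + ε) + momE P (Θ t) (α - ε)) ^ (1 / (α + ε))) ≠ ⊤))

/-- The tail `P[Z > x]` of a random variable, as a real number. -/
def tailP (P : Measure Ω) (Z : Ω → ℝ) (x : ℝ) : ℝ := (P {ω | x < Z ω}).toReal

/-- `X` and `Y` are asymptotically independent:
`P[X > x, Y > x] / P[X > x] → 0` and `P[X > x, Y > x] / P[Y > x] → 0` as `x → ∞`. -/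
def AsympIndep (P : Measure Ω) (X Y : Ω → ℝ) : Prop :=
  Tendsto (fun x : ℝ =>
      (P {ω | x < X ω ∧ x < Y ω}).toReal / (P {ω | x < X ω}).toReal) atTop (nhds 0) ∧
    Tendsto (fun x : ℝ =>
      (P {ω | x < X ω ∧ x < Y ω}).toReal / (P {ω | x < Y ω}).toReal) atTop (nhds 0)

/-!
Fix a level `S ≥ 1`. If `Θ₁X₁ > x` and `Θ₂X₂ > x`, then either some `Θᵢ > S`, or both `Xᵢ > x / S`.
The last event has probability `o(P[X₁ > x / S]) = o(R(x))`, by asymptotic independence and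
regular variation. For the others, a Potter-type bound `P[X > x / θ] ≤ C θ^p R(x)`, uniform in
`θ ≥ 1` and large `x` (with `p = α + ε`), and the independence of `X` and `Θ` give
`P[Θ > S, ΘX > x] ≤ C R(x) E[Θ^p; Θ > S]`, a small multiple of `R(x)` once `S` is large.
-/

lemma tendsto_zero_of_eventually_le_add {ι α : Type*} {l : Filter ι} [l.NeBot] {f : Filter α}
    {u : α → ℝ} {v : ι → α → ℝ} {w : ι → ℝ} (hu : ∀ᶠ x in f, 0 ≤ u x)
    (hv : ∀ᶠ i in l, Tendsto (v i) f (𝓝 0)) (hw : Tendsto w l (𝓝 0))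
    (h : ∀ᶠ i in l, ∀ᶠ x in f, u x ≤ v i x + w i) : Tendsto u f (𝓝 0) := by
  refine tendsto_order.2 ⟨fun a ha => hu.mono fun x hx => ha.trans_le hx, fun a ha => ?_⟩
  obtain ⟨i, ⟨hi, hvi⟩, hwi⟩ := ((h.and hv).and (hw.eventually (gt_mem_nhds (half_pos ha)))).exists
  filter_upwards [hi, hvi.eventually (gt_mem_nhds (half_pos ha))] with x hx hvx
  linarith

lemma RegVarying.tendsto_comp_mul_div {R : ℝ → ℝ} {ρ : ℝ} (hR : RegVarying R ρ) {g : ℝ → ℝ}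
    (hg : Tendsto (fun y => g y / R y) atTop (𝓝 0)) {t : ℝ} (ht : 0 < t) :
    Tendsto (fun x => g (t * x) / R x) atTop (𝓝 0) := by
  have h := (hg.comp (tendsto_id.const_mul_atTop ht)).mul (hR.2 t ht)
  rw [zero_mul] at h
  refine h.congr' ?_
  filter_upwards [eventually_gt_atTop 0] with x hx
  have : R (t * x) ≠ 0 := (hR.1 _ (mul_pos ht hx)).ne'
  simp [div_mul_div_cancel₀ this]

lemma RegVarying.eventually_half_le_mul {R : ℝ → ℝ} {α K : ℝ} (hR : RegVarying R (-α))
    (hK : (2 : ℝ) ^ α < K) : ∀ᶠ y in atTop, R (y / 2) ≤ K * R y := by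
  have h := hR.2 2⁻¹ (by norm_num)
  rw [Real.inv_rpow zero_le_two, Real.rpow_neg zero_le_two, inv_inv] at h
  filter_upwards [h.eventually_lt_const hK, eventually_gt_atTop 0] with y hy hy0
  rw [div_lt_iff₀ (hR.1 y hy0)] at hy
  simpa [div_eq_inv_mul] using hy.le

lemma le_pow_mul_of_half_le_mul {R : ℝ → ℝ} {x₀ K : ℝ} (hx₀ : 0 ≤ x₀) (hK : 0 ≤ K)
    (h : ∀ y, x₀ ≤ y → R (y / 2) ≤ K * R y) (n : ℕ) (y : ℝ) (hy : x₀ * 2 ^ n ≤ y) :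
    R (y / 2 ^ n) ≤ K ^ n * R y := by
  induction n with
  | zero => simp
  | succ n ih =>
    have hn : x₀ * 2 ^ n ≤ y := le_trans (by gcongr <;> norm_num) hy
    have hy' : x₀ ≤ y / 2 ^ n := by rwa [le_div_iff₀ (by positivity)]
    calc R (y / 2 ^ (n + 1)) = R (y / 2 ^ n / 2) := by rw [pow_succ, div_div]
      _ ≤ K * R (y / 2 ^ n) := h _ hy'
      _ ≤ K * (K ^ n * R y) := by gcongr; exact ih hn
      _ = K ^ (n + 1) * R y := by ring

lemma mul_comp_div_two_pow_le {R F : ℝ → ℝ} {x₀ K c : ℝ} (hRpos : ∀ y, 0 < y → 0 < R y)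
    (hx₀ : 0 < x₀) (hK : 1 ≤ K) (hc0 : 0 ≤ c) (hc1 : c ≤ 1)
    (hchain : ∀ (n : ℕ) (y : ℝ), x₀ * 2 ^ n ≤ y → R (y / 2 ^ n) ≤ K ^ n * R y)
    (hc : ∀ y, 0 < y → y ≤ 2 * x₀ → c ≤ R y) (hF0 : ∀ y, 0 ≤ F y) (hF1 : ∀ y, F y ≤ 1)
    (hFR : ∀ y, 0 < y → F y ≤ R y) (n : ℕ) {y : ℝ} (hy : x₀ ≤ y) :
    c * F (y / 2 ^ n) ≤ K ^ n * R y := by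
  have hy0 : 0 < y := hx₀.trans_le hy
  by_cases hn : x₀ * 2 ^ n ≤ y
  · calc c * F (y / 2 ^ n) ≤ F (y / 2 ^ n) := mul_le_of_le_one_left (hF0 _) hc1
      _ ≤ R (y / 2 ^ n) := hFR _ (by positivity)
      _ ≤ K ^ n * R y := hchain n y hn
  · -- Below the range of `hchain`: bound `F` by `1`, and `R y` from below through
    -- `R (y / 2 ^ j) ≥ c`, where `y / 2 ^ j ∈ [x₀, 2 x₀)`.
    obtain ⟨j, hj, hj'⟩ := exists_nat_pow_near ((one_le_div hx₀).2 hy) one_lt_two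
    rw [le_div_iff₀ hx₀] at hj
    rw [div_lt_iff₀ hx₀, pow_succ] at hj'
    have hjn : j ≤ n := by
      by_contra! h
      exact hn ((mul_le_mul_of_nonneg_left (pow_le_pow_right₀ one_le_two h.le) hx₀.le).trans
        (by linarith))
    calc c * F (y / 2 ^ n) ≤ c := mul_le_of_le_one_right hc0 (hF1 _)
      _ ≤ R (y / 2 ^ j) := hc _ (by positivity) (by rw [div_le_iff₀ (by positivity)]; linarith)
      _ ≤ K ^ j * R y := hchain j y (by linarith)
      _ ≤ K ^ n * R y := by gcongr; exact (hRpos y hy0).le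

theorem RegVarying.exists_potter_bound_of_antitone {R : ℝ → ℝ} {α p : ℝ} (hR : RegVarying R (-α))
    (hαp : α < p) (hp : 0 ≤ p)
    (hRaway : ∀ M : ℝ, 0 < M → ∃ c : ℝ, 0 < c ∧ ∀ x : ℝ, 0 < x → x ≤ M → c ≤ R x) :
    ∃ C x₀ : ℝ, 0 < C ∧ 0 < x₀ ∧ ∀ F : ℝ → ℝ, Antitone F → (∀ y, 0 ≤ F y) → (∀ y, F y ≤ 1) →
      (∀ y, 0 < y → F y ≤ R y) → ∀ x θ, x₀ ≤ x → 1 ≤ θ → F (x / θ) ≤ C * θ ^ p * R x := by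
  set K := (2 : ℝ) ^ p
  have hK : 1 ≤ K := Real.one_le_rpow one_le_two hp
  obtain ⟨x₁, hx₁⟩ := eventually_atTop.1
    (hR.eventually_half_le_mul (Real.rpow_lt_rpow_of_exponent_lt one_lt_two hαp))
  set x₀ := max x₁ 1
  have hx₀ : 0 < x₀ := zero_lt_one.trans_le (le_max_right _ _)
  have hchain := le_pow_mul_of_half_le_mul hx₀.le (zero_le_one.trans hK)
    fun y hy => hx₁ y ((le_max_left _ _).trans hy)
  obtain ⟨c, hc, hcR⟩ := hRaway (2 * x₀) (by positivity)
  set c' := min c 1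
  have hc' : 0 < c' := lt_min hc one_pos
  refine ⟨K / c', x₀, by positivity, hx₀, fun F hF hF0 hF1 hFR x θ hx hθ => ?_⟩
  obtain ⟨k, hk, hk'⟩ := exists_nat_pow_near hθ one_lt_two
  have hdyadic := mul_comp_div_two_pow_le hR.1 hx₀ hK hc'.le (min_le_right _ _) hchain
    (fun y hy hy' => (min_le_left _ _).trans (hcR y hy hy')) hF0 hF1 hFR (k + 1) hx
  have hKk : K ^ (k + 1) = K * (2 ^ k) ^ p := by rw [pow_succ', Real.rpow_pow_comm zero_le_two]
  rw [hKk] at hdyadic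
  have hRx : 0 ≤ R x := (hR.1 x (hx₀.trans_le hx)).le
  calc F (x / θ) ≤ F (x / 2 ^ (k + 1)) :=
        hF (div_le_div_of_nonneg_left (hx₀.trans_le hx).le (by positivity) hk'.le)
    _ ≤ K * (2 ^ k) ^ p * R x / c' := by rw [le_div_iff₀ hc', mul_comm]; linarith
    _ ≤ K / c' * θ ^ p * R x := by
      rw [div_mul_eq_mul_div, div_mul_eq_mul_div, div_le_div_iff_of_pos_right hc']
      gcongr

lemma AsympIndep.tendsto_measure_and_div {P : Measure Ω} [IsFiniteMeasure P] {X Y : Ω → ℝ}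
    {R : ℝ → ℝ} (h : AsympIndep P X Y) (hdom : ∀ x, 0 < x → (P {ω | x < X ω}).toReal ≤ R x) :
    Tendsto (fun x => (P {ω | x < X ω ∧ x < Y ω}).toReal / R x) atTop (𝓝 0) := by
  refine tendsto_of_tendsto_of_tendsto_of_le_of_le' tendsto_const_nhds h.1 ?_ ?_
  · filter_upwards [eventually_gt_atTop 0] with x hx
    exact div_nonneg ENNReal.toReal_nonneg (ENNReal.toReal_nonneg.trans (hdom x hx))
  · filter_upwards [eventually_gt_atTop 0] with x hx
    have hJF : (P {ω | x < X ω ∧ x < Y ω}).toReal ≤ (P {ω | x < X ω}).toReal :=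
      ENNReal.toReal_mono (measure_ne_top _ _) (measure_mono fun ω hω => hω.1)
    rcases ENNReal.toReal_nonneg.eq_or_lt with hF | hF
    · simp [le_antisymm (hJF.trans hF.ge) ENNReal.toReal_nonneg]
    · exact div_le_div_of_nonneg_left ENNReal.toReal_nonneg hF (hdom x hx)

lemma tendsto_setLIntegral_setOf_lt_zero (P : Measure Ω) {Θ : Ω → ℝ} (hΘ : Measurable Θ)
    (f : Ω → ℝ≥0∞) (hf : ∫⁻ ω, f ω ∂P ≠ ∞) :
    Tendsto (fun S : ℝ => ∫⁻ ω in {ω | S < Θ ω}, f ω ∂P) atTop (𝓝 0) := by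
  have hmeas : ∀ S : ℝ, MeasurableSet {ω | S < Θ ω} := fun S => measurableSet_lt measurable_const hΘ
  have hanti : Antitone fun S : ℝ => {ω | S < Θ ω} := fun S T hST ω hω => hST.trans_lt hω
  have hempty : (⋂ S : ℝ, {ω | S < Θ ω}) = ∅ :=
    Set.iInter_eq_empty_iff.2 fun ω => ⟨Θ ω, (lt_irrefl (Θ ω) ·)⟩
  have hfin : ∃ S : ℝ, P.withDensity f {ω | S < Θ ω} ≠ ∞ :=
    ⟨0, by
      rw [withDensity_apply f (hmeas 0)]
      exact ne_top_of_le_ne_top hf (setLIntegral_le_lintegral _ _)⟩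
  have h := tendsto_measure_iInter_atTop (fun S => (hmeas S).nullMeasurableSet) hanti hfin
  rw [hempty, measure_empty] at h
  exact h.congr fun S => withDensity_apply f (hmeas S)

def truncMomE (P : Measure Ω) (Θ : Ω → ℝ) (r S : ℝ) : ℝ≥0∞ :=
  ∫⁻ ω in {ω | S < Θ ω}, ENNReal.ofReal (Θ ω ^ r) ∂P

lemma truncMomE_le_momE (P : Measure Ω) (Θ : Ω → ℝ) (r S : ℝ) :
    truncMomE P Θ r S ≤ momE P Θ r :=
  setLIntegral_le_lintegral _ _

lemma tendsto_truncMomE_toReal {P : Measure Ω} {Θ : Ω → ℝ} (hΘ : Measurable Θ) {r : ℝ}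
    (h : momE P Θ r ≠ ⊤) : Tendsto (fun S => (truncMomE P Θ r S).toReal) atTop (𝓝 0) :=
  (ENNReal.tendsto_toReal ENNReal.zero_ne_top).comp
    (tendsto_setLIntegral_setOf_lt_zero P hΘ _ h)

lemma measure_lt_and_lt_mul_le_truncMomE {P : Measure Ω} [IsFiniteMeasure P] {X Θ : Ω → ℝ}
    (hX : Measurable X) (hΘ : Measurable Θ) (hind : IndepFun X Θ P) {S x c p : ℝ} (hS : 0 ≤ S)
    (htail : ∀ θ, S < θ → (P {ω | x / θ < X ω}).toReal ≤ c * θ ^ p) :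
    P {ω | S < Θ ω ∧ x < Θ ω * X ω} ≤
      ENNReal.ofReal c * truncMomE P Θ p S := by
  set A : Set (ℝ × ℝ) := {q | S < q.2 ∧ x < q.2 * q.1}
  have hA : MeasurableSet A := (measurableSet_lt measurable_const measurable_snd).inter
    (measurableSet_lt measurable_const (measurable_snd.mul measurable_fst))
  have hslice : ∀ θ, P.map X ((fun a => (a, θ)) ⁻¹' A) ≤
      (Set.Ioi S).indicator (fun θ => ENNReal.ofReal c * ENNReal.ofReal (θ ^ p)) θ := by
    intro θ
    by_cases hθ : S < θ
    · have hθ0 : 0 < θ := hS.trans_lt hθ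
      have hpre : (fun a => (a, θ)) ⁻¹' A = Set.Ioi (x / θ) := by
        ext a
        simp [A, hθ, div_lt_iff₀ hθ0, mul_comm]
      rw [Set.indicator_of_mem (Set.mem_Ioi.2 hθ), hpre, Measure.map_apply hX measurableSet_Ioi,
        ← ENNReal.ofReal_mul' (Real.rpow_nonneg hθ0.le p)]
      exact (ENNReal.ofReal_toReal (measure_ne_top _ _)).symm.trans_le
        (ENNReal.ofReal_le_ofReal (htail θ hθ))
    · have hpre : (fun a => (a, θ)) ⁻¹' A = ∅ := by
        ext a
        simp [A, hθ]
      simp [hpre]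
  calc P {ω | S < Θ ω ∧ x < Θ ω * X ω} = P.map (fun ω => (X ω, Θ ω)) A := by
        rw [Measure.map_apply (hX.prodMk hΘ) hA]; rfl
    _ = (P.map X).prod (P.map Θ) A := by
        rw [(indepFun_iff_map_prod_eq_prod_map_map hX.aemeasurable hΘ.aemeasurable).1 hind]
    _ = ∫⁻ θ, P.map X ((fun a => (a, θ)) ⁻¹' A) ∂(P.map Θ) := Measure.prod_apply_symm hA
    _ ≤ ∫⁻ θ in Set.Ioi S, ENNReal.ofReal c * ENNReal.ofReal (θ ^ p) ∂(P.map Θ) := by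
        rw [← lintegral_indicator measurableSet_Ioi]; exact lintegral_mono hslice
    _ = ∫⁻ ω in {ω | S < Θ ω}, ENNReal.ofReal c * ENNReal.ofReal (Θ ω ^ p) ∂P :=
        setLIntegral_map measurableSet_Ioi (by fun_prop) hΘ
    _ = _ := lintegral_const_mul' _ _ ENNReal.ofReal_ne_top

lemma measure_lt_mul_and_lt_mul_le (P : Measure Ω) {X₁ X₂ Θ₁ Θ₂ : Ω → ℝ}
    (hΘ : ∀ᵐ ω ∂P, 0 < Θ₁ ω ∧ 0 < Θ₂ ω) {x : ℝ} (hx : 0 ≤ x) (S : ℝ) :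
    P {ω | x < Θ₁ ω * X₁ ω ∧ x < Θ₂ ω * X₂ ω} ≤
      P {ω | x / S < X₁ ω ∧ x / S < X₂ ω} + P {ω | S < Θ₁ ω ∧ x < Θ₁ ω * X₁ ω} +
        P {ω | S < Θ₂ ω ∧ x < Θ₂ ω * X₂ ω} := by
  have hdiv : ∀ {θ a : ℝ}, 0 < θ → θ ≤ S → x < θ * a → x / S < a := fun hθ hθS h =>
    (div_le_div_of_nonneg_left hx hθ hθS).trans_lt ((div_lt_iff₀' hθ).2 h)
  set A := {ω | x / S < X₁ ω ∧ x / S < X₂ ω}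
  set B₁ := {ω | S < Θ₁ ω ∧ x < Θ₁ ω * X₁ ω}
  set B₂ := {ω | S < Θ₂ ω ∧ x < Θ₂ ω * X₂ ω}
  have hsub : {ω | x < Θ₁ ω * X₁ ω ∧ x < Θ₂ ω * X₂ ω} ≤ᵐ[P] (A ∪ B₁ ∪ B₂ : Set Ω) := by
    filter_upwards [hΘ] with ω ⟨hΘ₁, hΘ₂⟩ ⟨h₁, h₂⟩
    by_cases hS₁ : S < Θ₁ ω
    · exact Or.inl (Or.inr ⟨hS₁, h₁⟩)
    by_cases hS₂ : S < Θ₂ ω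
    · exact Or.inr ⟨hS₂, h₂⟩
    exact Or.inl (Or.inl ⟨hdiv hΘ₁ (not_lt.1 hS₁) h₁, hdiv hΘ₂ (not_lt.1 hS₂) h₂⟩)
  calc P {ω | x < Θ₁ ω * X₁ ω ∧ x < Θ₂ ω * X₂ ω} ≤ P (A ∪ B₁ ∪ B₂) := measure_mono_ae hsub
    _ ≤ P A + P B₁ + P B₂ :=
      (measure_union_le _ _).trans (add_le_add_left (measure_union_le _ _) _)

lemma toReal_measure_lt_mul_and_lt_mul_le {P : Measure Ω} [IsFiniteMeasure P]
    {X₁ X₂ Θ₁ Θ₂ : Ω → ℝ} (hX₁ : Measurable X₁) (hX₂ : Measurable X₂) (hΘ₁ : Measurable Θ₁)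
    (hΘ₂ : Measurable Θ₂) (hind₁ : IndepFun X₁ Θ₁ P) (hind₂ : IndepFun X₂ Θ₂ P)
    (hΘ : ∀ᵐ ω ∂P, 0 < Θ₁ ω ∧ 0 < Θ₂ ω) {S x c p : ℝ} (hS : 0 ≤ S) (hx : 0 ≤ x) (hc : 0 ≤ c)
    (htail₁ : ∀ θ, S < θ → (P {ω | x / θ < X₁ ω}).toReal ≤ c * θ ^ p)
    (htail₂ : ∀ θ, S < θ → (P {ω | x / θ < X₂ ω}).toReal ≤ c * θ ^ p)
    (hmom₁ : momE P Θ₁ p ≠ ⊤) (hmom₂ : momE P Θ₂ p ≠ ⊤) :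
    (P {ω | x < Θ₁ ω * X₁ ω ∧ x < Θ₂ ω * X₂ ω}).toReal ≤
      (P {ω | x / S < X₁ ω ∧ x / S < X₂ ω}).toReal +
        c * ((truncMomE P Θ₁ p S).toReal + (truncMomE P Θ₂ p S).toReal) := by
  have h₁ := ne_top_of_le_ne_top hmom₁ (truncMomE_le_momE P Θ₁ p S)
  have h₂ := ne_top_of_le_ne_top hmom₂ (truncMomE_le_momE P Θ₂ p S)
  have hle := (measure_lt_mul_and_lt_mul_le P hΘ hx S).trans
    (add_le_add (add_le_add le_rfl (measure_lt_and_lt_mul_le_truncMomE hX₁ hΘ₁ hind₁ hS htail₁))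
      (measure_lt_and_lt_mul_le_truncMomE hX₂ hΘ₂ hind₂ hS htail₂))
  refine (ENNReal.toReal_mono (by finiteness) hle).trans_eq ?_
  rw [ENNReal.toReal_add (by finiteness) (by finiteness),
    ENNReal.toReal_add (by finiteness) (by finiteness), ENNReal.toReal_mul, ENNReal.toReal_mul,
    ENNReal.toReal_ofReal hc]
  ring

theorem stmt1_general {Ω : Type*} [MeasurableSpace Ω] (P : Measure Ω) [IsProbabilityMeasure P]
    (X₁ X₂ Θ₁ Θ₂ : Ω → ℝ) (α ε : ℝ) (R : ℝ → ℝ)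
    (hX₁m : Measurable X₁) (hX₂m : Measurable X₂)
    (hΘ₁m : Measurable Θ₁) (hΘ₂m : Measurable Θ₂)
    (hpos : ∀ᵐ ω ∂P, 0 < X₁ ω ∧ 0 < X₂ ω ∧ 0 < Θ₁ ω ∧ 0 < Θ₂ ω)
    (hident : IdentDistrib X₁ X₂ P P)
    (hasymp : AsympIndep P X₁ X₂)
    (hindep : IndepFun (fun ω => (X₁ ω, X₂ ω)) (fun ω => (Θ₁ ω, Θ₂ ω)) P)
    (hα : 0 < α) (hε : 0 < ε)
    (hRrv : RegVarying R (-α))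
    (hRaway : ∀ M : ℝ, 0 < M → ∃ c : ℝ, 0 < c ∧ ∀ x : ℝ, 0 < x → x ≤ M → c ≤ R x)
    (hdom : ∀ x : ℝ, 0 < x → (P {ω | x < X₁ ω}).toReal ≤ R x)
    (hmom₁ : momE P Θ₁ (α + ε) ≠ ⊤) (hmom₂ : momE P Θ₂ (α + ε) ≠ ⊤) :
    Tendsto (fun x : ℝ =>
        (P {ω | x < Θ₁ ω * X₁ ω ∧ x < Θ₂ ω * X₂ ω}).toReal / R x)
      atTop (nhds 0) := by
  set p := α + ε
  obtain ⟨C, x₀, hC, hx₀, hpotter⟩ :=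
    hRrv.exists_potter_bound_of_antitone (by linarith : α < p) (by positivity) hRaway
  have hF : Antitone fun y => (P {ω | y < X₁ ω}).toReal := fun a b hab =>
    ENNReal.toReal_mono (measure_ne_top _ _) (measure_mono fun ω hω => hab.trans_lt hω)
  have htail₁ := hpotter _ hF (fun _ => ENNReal.toReal_nonneg) (fun _ => measureReal_le_one) hdom
  have htail₂ : ∀ x θ, x₀ ≤ x → 1 ≤ θ → (P {ω | x / θ < X₂ ω}).toReal ≤ C * θ ^ p * R x :=
    fun x θ hx hθ => (congrArg ENNReal.toReal
      (hident.measure_mem_eq measurableSet_Ioi).symm).trans_le (htail₁ x θ hx hθ)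
  refine tendsto_zero_of_eventually_le_add (l := atTop)
    (v := fun S x => (P {ω | x / S < X₁ ω ∧ x / S < X₂ ω}).toReal / R x)
    (w := fun S => C * ((truncMomE P Θ₁ p S).toReal + (truncMomE P Θ₂ p S).toReal)) ?_ ?_ ?_ ?_
  · filter_upwards [eventually_gt_atTop 0] with x hx
    exact div_nonneg ENNReal.toReal_nonneg (hRrv.1 x hx).le
  · filter_upwards [eventually_gt_atTop 0] with S hS
    refine (hRrv.tendsto_comp_mul_div (hasymp.tendsto_measure_and_div hdom)
      (inv_pos.2 hS)).congr fun x => ?_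
    simp only [inv_mul_eq_div]
  · simpa using ((tendsto_truncMomE_toReal hΘ₁m hmom₁).add
      (tendsto_truncMomE_toReal hΘ₂m hmom₂)).const_mul C
  filter_upwards [eventually_ge_atTop 1] with S hS
  filter_upwards [eventually_ge_atTop x₀] with x hx
  have hRx : 0 < R x := hRrv.1 x (hx₀.trans_le hx)
  rw [div_add' _ _ _ hRx.ne', div_le_div_iff_of_pos_right hRx]
  refine (toReal_measure_lt_mul_and_lt_mul_le hX₁m hX₂m hΘ₁m hΘ₂m
    (hindep.comp measurable_fst measurable_fst) (hindep.comp measurable_snd measurable_snd)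
    (hpos.mono fun ω h => h.2.2) (zero_le_one.trans hS) (hx₀.trans_le hx).le
    (c := C * R x) (by positivity)
    (fun θ hθ => (htail₁ x θ hx (hS.trans hθ.le)).trans_eq (by ring))
    (fun θ hθ => (htail₂ x θ hx (hS.trans hθ.le)).trans_eq (by ring)) hmom₁ hmom₂).trans_eq ?_
  ring

/-- Lemma 4.3: if `(X₁,X₂)` and `(Θ₁,Θ₂)` are independent random vectors with positive
coordinates, `X₁, X₂` identically distributed and asymptotically independent with common
tail dominated by a bounded regularly varying function `R` of index `-α` that stays bounded
away from `0` on bounded intervals, and `Θ₁, Θ₂` have finite `(α+ε)`-th moments, then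
`P[Θ₁X₁ > x, Θ₂X₂ > x]/R(x) → 0` as `x → ∞`. -/
theorem stmt1 {Ω : Type*} [MeasurableSpace Ω] (P : Measure Ω) [IsProbabilityMeasure P]
    (X₁ X₂ Θ₁ Θ₂ : Ω → ℝ) (α ε : ℝ) (R : ℝ → ℝ)
    (hX₁m : Measurable X₁) (hX₂m : Measurable X₂)
    (hΘ₁m : Measurable Θ₁) (hΘ₂m : Measurable Θ₂)
    (hpos : ∀ᵐ ω ∂P, 0 < X₁ ω ∧ 0 < X₂ ω ∧ 0 < Θ₁ ω ∧ 0 < Θ₂ ω)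
    (hident : IdentDistrib X₁ X₂ P P)
    (hasymp : AsympIndep P X₁ X₂)
    (hindep : IndepFun (fun ω => (X₁ ω, X₂ ω)) (fun ω => (Θ₁ ω, Θ₂ ω)) P)
    (hα : 0 < α) (hε : 0 < ε)
    (hRrv : RegVarying R (-α))
    (hRbdd : ∃ C : ℝ, ∀ x : ℝ, 0 < x → R x ≤ C)
    (hRaway : ∀ M : ℝ, 0 < M → ∃ c : ℝ, 0 < c ∧ ∀ x : ℝ, 0 < x → x ≤ M → c ≤ R x)
    (hdom : ∀ x : ℝ, 0 < x → (P {ω | x < X₁ ω}).toReal ≤ R x)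
    (hmom₁ : momE P Θ₁ (α + ε) ≠ ⊤) (hmom₂ : momE P Θ₂ (α + ε) ≠ ⊤) :
    Tendsto (fun x : ℝ =>
        (P {ω | x < Θ₁ ω * X₁ ω ∧ x < Θ₂ ω * X₂ ω}).toReal / R x)
      atTop (nhds 0) :=
  stmt1_general P X₁ X₂ Θ₁ Θ₂ α ε R hX₁m hX₂m hΘ₁m hΘ₂m hpos hident hasymp hindep hα hε hRrv hRaway
    hdom hmom₁ hmom₂
end
end

section
/- Let p be a nonnegative integer and μ a probability measure in M_p. Then z⁻¹ = o(r_G(z)) as z→∞ non-tangentially; that is, for every η>0, |z·r_G(z)| → ∞ as |z|→∞ with z ∈ Γ_{η,M} (M arbitrary). -/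
open MeasureTheory Filter Topology
open scoped ENNReal

noncomputable section

/-- `μ ∈ M_p`: a Borel probability measure on `[0,∞)` with finite `p`-th moment and
infinite `(p+1)`-th moment. -/
def MemMp (μ : Measure ℝ) (p : ℕ) : Prop :=
  IsProbabilityMeasure μ ∧ μ (Set.Iio 0) = 0 ∧
    (∫⁻ t, ENNReal.ofReal (t ^ p) ∂μ) ≠ ⊤ ∧ (∫⁻ t, ENNReal.ofReal (t ^ (p + 1)) ∂μ) = ⊤

/-- The remainder term in the Laurent series expansion of the Cauchy transform of `μ`:
`r_G(z) = ∫₀^∞ t^{p+1} (z − t)⁻¹ dμ(t)`. -/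
def rG (μ : Measure ℝ) (p : ℕ) (z : ℂ) : ℂ :=
  ∫ t : ℝ, (t : ℂ) ^ (p + 1) / (z - (t : ℂ)) ∂μ

/-! `-Im r_G(z) = ∫ t^{p+1} Im z / |z - t|² dμ(t)` is a Poisson-type integral with a positive
kernel. In the cone `|Re z| ≤ η Im z` one has `|z| ≤ (1 + η) Im z` and
`|z - t|² ≤ 2 (|z|² + t²)`, hence
`∫ t^{p+1} |z|² / (|z|² + t²) dμ(t) ≤ 2 (1 + η) |z r_G(z)|`,
and the left side tends to `∫ t^{p+1} dμ(t) = ∞` by monotone convergence. -/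

open Complex

lemma sq_div_sq_add_sq_le_of_le (t : ℝ) {a b : ℝ} (ha : 0 ≤ a) (hab : a ≤ b) :
    a ^ 2 / (a ^ 2 + t ^ 2) ≤ b ^ 2 / (b ^ 2 + t ^ 2) := by
  rcases ha.eq_or_lt with rfl | ha
  · simp only [ne_eq, OfNat.ofNat_ne_zero, not_false_eq_true, zero_pow, zero_div]
    positivity
  have hb : 0 < b := ha.trans_le hab
  rw [div_le_div_iff₀ (by positivity) (by positivity)]
  nlinarith [mul_le_mul hab hab ha.le hb.le, sq_nonneg t]

lemma tendsto_sq_div_sq_add_sq (t : ℝ) :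
    Tendsto (fun R : ℝ => R ^ 2 / (R ^ 2 + t ^ 2)) atTop (𝓝 1) := by
  have h : Tendsto (fun R : ℝ => 1 - t ^ 2 / (R ^ 2 + t ^ 2)) atTop (𝓝 (1 - 0)) :=
    tendsto_const_nhds.sub <| tendsto_const_nhds.div_atTop <|
      (tendsto_pow_atTop two_ne_zero).atTop_add tendsto_const_nhds
  rw [sub_zero] at h
  refine h.congr' ?_
  filter_upwards [eventually_gt_atTop 0] with R hR
  field_simp
  ring

lemma tendsto_lintegral_sq_div_sq_add_sq_mul (μ : Measure ℝ) {f : ℝ → ℝ≥0∞}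
    (hf : AEMeasurable f μ) :
    Tendsto (fun R : ℝ => ∫⁻ t, ENNReal.ofReal (R ^ 2 / (R ^ 2 + t ^ 2)) * f t ∂μ) atTop
      (𝓝 (∫⁻ t, f t ∂μ)) := by
  set F := fun R : ℝ => ∫⁻ t, ENNReal.ofReal (R ^ 2 / (R ^ 2 + t ^ 2)) * f t ∂μ
  have hmono : ∀ {a b : ℝ}, 0 ≤ a → a ≤ b → F a ≤ F b := fun ha hab =>
    lintegral_mono fun t =>
      mul_le_mul_left (ENNReal.ofReal_le_ofReal (sq_div_sq_add_sq_le_of_le t ha hab)) _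
  have hnat : Tendsto (fun n : ℕ => F n) atTop (𝓝 (∫⁻ t, f t ∂μ)) := by
    refine lintegral_tendsto_of_tendsto_of_monotone (fun n => ?_) ?_ ?_
    · exact (by fun_prop : Measurable fun t : ℝ => _).aemeasurable.mul hf
    · exact ae_of_all _ fun t m n hmn => mul_le_mul_left (ENNReal.ofReal_le_ofReal
        (sq_div_sq_add_sq_le_of_le t m.cast_nonneg (Nat.cast_le.2 hmn))) _
    · refine ae_of_all _ fun t => ?_
      simpa using ENNReal.Tendsto.mul_const
        ((ENNReal.tendsto_ofReal (tendsto_sq_div_sq_add_sq t)).comp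
          tendsto_natCast_atTop_atTop) (Or.inl (by simp))
  refine tendsto_of_tendsto_of_tendsto_of_le_of_le' (hnat.comp tendsto_nat_floor_atTop)
    tendsto_const_nhds ?_ (Eventually.of_forall fun R => ?_)
  · filter_upwards [eventually_ge_atTop 0] with R hR
    exact hmono (Nat.cast_nonneg _) (Nat.floor_le hR)
  · refine lintegral_mono fun t => mul_le_of_le_one_left zero_le ?_
    exact ENNReal.ofReal_le_one.2 (div_le_one_of_le₀ (by nlinarith) (by positivity))

section CauchyTransform

variable {μ : Measure ℝ} {p : ℕ} {z : ℂ}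

lemma ae_nonneg_of_measure_Iio_eq_zero (h : μ (Set.Iio 0) = 0) : ∀ᵐ t ∂μ, 0 ≤ t :=
  ae_iff.2 <| by simp only [not_le]; exact h

lemma integrable_pow_of_lintegral_ne_top (h0 : ∀ᵐ t ∂μ, 0 ≤ t)
    (hfin : ∫⁻ t, ENNReal.ofReal (t ^ p) ∂μ ≠ ⊤) : Integrable (fun t : ℝ => t ^ p) μ :=
  ⟨(continuous_pow p).aestronglyMeasurable,
    (hasFiniteIntegral_iff_ofReal (h0.mono fun _ ht => pow_nonneg ht p)).2 hfin.lt_top⟩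

lemma norm_pow_succ_div_sub_le (hz : 0 < z.im) {t : ℝ} (ht : 0 ≤ t) :
    ‖(t : ℂ) ^ (p + 1) / (z - t)‖ ≤ (1 + ‖z‖ / z.im) * t ^ p := by
  have him : z.im ≤ ‖z - t‖ := by simpa [abs_of_pos hz] using abs_im_le_norm (z - t)
  have hsub : 0 < ‖z - t‖ := hz.trans_le him
  have ht_le : t ≤ ‖z - t‖ + ‖z‖ := by
    simpa [abs_of_nonneg ht, norm_sub_rev] using norm_sub_le_norm_sub_add_norm_sub (t : ℂ) z 0
  rw [norm_div, norm_pow, norm_real, Real.norm_of_nonneg ht, pow_succ, mul_div_assoc,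
    mul_comm (1 + _)]
  gcongr
  calc t / ‖z - t‖ ≤ (‖z - t‖ + ‖z‖) / ‖z - t‖ := by gcongr
    _ = 1 + ‖z‖ / ‖z - t‖ := by rw [add_div, div_self hsub.ne']
    _ ≤ 1 + ‖z‖ / z.im := by gcongr

lemma integrable_pow_succ_div_sub (h0 : ∀ᵐ t ∂μ, 0 ≤ t) (hp : Integrable (fun t : ℝ => t ^ p) μ)
    (hz : 0 < z.im) : Integrable (fun t : ℝ => (t : ℂ) ^ (p + 1) / (z - t)) μ :=
  (hp.const_mul _).mono' (by fun_prop : Measurable _).aestronglyMeasurable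
    (h0.mono fun _ ht => norm_pow_succ_div_sub_le hz ht)

lemma im_pow_succ_div_sub (z : ℂ) (t : ℝ) (p : ℕ) :
    ((t : ℂ) ^ (p + 1) / (z - t)).im = -(t ^ (p + 1) * (z.im / normSq (z - t))) := by
  rw [← ofReal_pow, div_im]
  simp only [ofReal_re, ofReal_im, sub_im]
  ring

lemma neg_im_rG (h0 : ∀ᵐ t ∂μ, 0 ≤ t) (hp : Integrable (fun t : ℝ => t ^ p) μ)
    (hz : 0 < z.im) :
    -(rG μ p z).im = ∫ t, t ^ (p + 1) * (z.im / normSq (z - t)) ∂μ := by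
  have him : (rG μ p z).im = ∫ t, ((t : ℂ) ^ (p + 1) / (z - t)).im ∂μ :=
    (integral_im (integrable_pow_succ_div_sub h0 hp hz)).symm
  rw [him, ← integral_neg]
  simp_rw [im_pow_succ_div_sub, neg_neg]

variable {η : ℝ}

lemma sq_norm_div_sq_norm_add_sq_le (hz : 0 < z.im) (hη : |z.re| ≤ η * z.im) (t : ℝ) :
    ‖z‖ ^ 2 / (‖z‖ ^ 2 + t ^ 2) ≤ 2 * (1 + η) * ‖z‖ * (z.im / normSq (z - t)) := by
  have hnorm : ‖z‖ ≤ (1 + η) * z.im :=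
    (norm_le_abs_re_add_abs_im z).trans (by rw [abs_of_pos hz]; linarith)
  have hN : normSq (z - t) ≤ 2 * (‖z‖ ^ 2 + t ^ 2) := by
    rw [normSq_eq_norm_sq]
    calc ‖z - t‖ ^ 2 ≤ (‖z‖ + |t|) ^ 2 := by
          gcongr; simpa using norm_sub_le z t
      _ ≤ 2 * (‖z‖ ^ 2 + t ^ 2) := by nlinarith [sq_abs t, sq_nonneg (‖z‖ - |t|)]
  have hN0 : 0 < normSq (z - t) :=
    normSq_pos.2 fun h => by simpa [hz.ne'] using congrArg im h
  calc ‖z‖ ^ 2 / (‖z‖ ^ 2 + t ^ 2) = 2 * ‖z‖ * ‖z‖ / (2 * (‖z‖ ^ 2 + t ^ 2)) := by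
        rw [mul_assoc, ← sq, mul_div_mul_left _ _ two_ne_zero]
    _ ≤ 2 * ‖z‖ * ((1 + η) * z.im) / normSq (z - t) :=
        div_le_div₀ (by have := (norm_nonneg z).trans hnorm; positivity) (by gcongr) hN0 hN
    _ = 2 * (1 + η) * ‖z‖ * (z.im / normSq (z - t)) := by ring

lemma lintegral_le_norm_mul_rG (h0 : ∀ᵐ t ∂μ, 0 ≤ t) (hp : Integrable (fun t : ℝ => t ^ p) μ)
    (hz : 0 < z.im) (hη : |z.re| ≤ η * z.im) :
    ∫⁻ t, ENNReal.ofReal (‖z‖ ^ 2 / (‖z‖ ^ 2 + t ^ 2)) * ENNReal.ofReal (t ^ (p + 1)) ∂μ ≤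
      ENNReal.ofReal (2 * (1 + η) * ‖z * rG μ p z‖) := by
  set P := fun t : ℝ => t ^ (p + 1) * (z.im / normSq (z - t))
  have hP : Integrable P μ :=
    (integrable_pow_succ_div_sub h0 hp hz).im.neg.congr <| ae_of_all _ fun t => by
      simp only [Pi.neg_apply, RCLike.im_to_complex, im_pow_succ_div_sub, neg_neg, P]
  have hP0 : ∀ t, 0 ≤ t → 0 ≤ P t := fun t ht =>
    mul_nonneg (pow_nonneg ht _) (div_nonneg hz.le (normSq_nonneg _))
  have hη0 : 0 ≤ η := le_of_mul_le_mul_right (by simpa using (abs_nonneg _).trans hη) hz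
  calc ∫⁻ t, ENNReal.ofReal (‖z‖ ^ 2 / (‖z‖ ^ 2 + t ^ 2)) * ENNReal.ofReal (t ^ (p + 1)) ∂μ
      ≤ ∫⁻ t, ENNReal.ofReal (2 * (1 + η) * ‖z‖ * P t) ∂μ := by
        refine lintegral_mono_ae (h0.mono fun t ht => ?_)
        rw [← ENNReal.ofReal_mul (by positivity)]
        refine ENNReal.ofReal_le_ofReal ?_
        calc _ = t ^ (p + 1) * (‖z‖ ^ 2 / (‖z‖ ^ 2 + t ^ 2)) := mul_comm _ _
          _ ≤ t ^ (p + 1) * (2 * (1 + η) * ‖z‖ * (z.im / normSq (z - t))) := by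
            gcongr; exact sq_norm_div_sq_norm_add_sq_le hz hη t
          _ = 2 * (1 + η) * ‖z‖ * P t := by ring
    _ = ENNReal.ofReal (2 * (1 + η) * ‖z‖ * -(rG μ p z).im) := by
        rw [neg_im_rG h0 hp hz, ← integral_const_mul,
          ofReal_integral_eq_lintegral_ofReal (hP.const_mul _)
            (h0.mono fun t ht => mul_nonneg (by positivity) (hP0 t ht))]
    _ ≤ ENNReal.ofReal (2 * (1 + η) * ‖z * rG μ p z‖) := by
        rw [norm_mul, ← mul_assoc]
        gcongr
        exact (neg_le_abs _).trans (abs_im_le_norm _)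

end CauchyTransform

/-- Proposition (lower bound for `r_G`): if `μ ∈ M_p`, then `z⁻¹ = o(r_G(z))` as `z → ∞`
non-tangentially, i.e. for every `η > 0`, `|z·r_G(z)| → ∞` as `|z| → ∞` within the cone
`Γ_η = {z : 0 < Im z, |Re z| < η Im z}`. -/
theorem stmt15 (μ : Measure ℝ) (p : ℕ) (hμ : MemMp μ p) :
    ∀ η : ℝ, 0 < η →
      Tendsto (fun z : ℂ => ‖z * rG μ p z‖)
        (Filter.comap (fun z : ℂ => ‖z‖) atTop ⊓
          Filter.principal {z : ℂ | 0 < z.im ∧ |z.re| < η * z.im})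
        atTop := by
  obtain ⟨-, hIio, hfin, hinf⟩ := hμ
  intro η hη
  have h0 := ae_nonneg_of_measure_Iio_eq_zero hIio
  have hp := integrable_pow_of_lintegral_ne_top h0 hfin
  have hlim : Tendsto (fun z : ℂ => ∫⁻ t, ENNReal.ofReal (‖z‖ ^ 2 / (‖z‖ ^ 2 + t ^ 2)) *
      ENNReal.ofReal (t ^ (p + 1)) ∂μ) (comap (fun z : ℂ => ‖z‖) atTop) (𝓝 ⊤) := by
    have h := tendsto_lintegral_sq_div_sq_add_sq_mul μ
      (f := fun t => ENNReal.ofReal (t ^ (p + 1))) (by fun_prop)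
    rw [hinf] at h
    exact h.comp tendsto_comap
  refine (tendsto_const_mul_atTop_of_pos (by positivity : (0 : ℝ) < 2 * (1 + η))).1 <|
    ENNReal.tendsto_ofReal_nhds_top.1 <| tendsto_nhds_top_mono (hlim.mono_left inf_le_left) ?_
  exact eventually_inf_principal.2 <| Eventually.of_forall fun z hz =>
    lintegral_le_norm_mul_rG h0 hp hz.1 hz.2.le
end
end
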